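/- arXiv:2205.14754 — 2 statements merged into one kernel-verified Lean document; each statement's English description precedes it below -/
import Mathlib

section
/- Let G be a finite simple graph with n edges numbered 1,…,n, and let a, b ∈ ℝⁿ be two weight vectors lying in the same region of the matching arrangement MA(G) (i.e., for every simple path or even simple cycle P = (r₁,…,r_m) in G, the alternating sums a_{r₁} − a_{r₂} + a_{r₃} − ⋯ and b_{r₁} − b_{r₂} + b_{r₃} − ⋯ have the same strict sign). If M is the unique maximum-weight matching for weights a, then M is also the unique maximum-weight matching for weights b. -/
open Finset

/-- The alternating-sign vector `e_{i₁} - e_{i₂} + e_{i₃} - ⋯` of a list of indices. -/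
def altVec {n : ℕ} : List (Fin n) → (Fin n → ℝ)
  | [] => 0
  | i :: l => Pi.single i 1 - altVec l

/-- The hyperplane (through the origin) with normal vector `v`, i.e. the kernel of
`x ↦ ∑ i, v i * x i`. -/
noncomputable def hyp {n : ℕ} (v : Fin n → ℝ) : Submodule ℝ (Fin n → ℝ) :=
  LinearMap.ker (∑ i, v i • (LinearMap.proj i : (Fin n → ℝ) →ₗ[ℝ] ℝ))

/-- The list of edge numbers along a walk, for a numbering `N` of the edges. -/
def edgeIdx {V : Type*} {n : ℕ} {G : SimpleGraph V} (N : G.edgeSet ≃ Fin n)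
    {a b : V} (p : G.Walk a b) : List (Fin n) :=
  p.edges.pmap (fun e he => N ⟨e, he⟩) (fun _ he => p.edges_subset_edgeSet he)

/-- The matching arrangement `MA(G, N)` of a graph `G` with edge numbering `N`:
the set of hyperplanes `x_{r₁} - x_{r₂} + x_{r₃} - ⋯ = 0`, one for every simple path
and every even simple cycle `(r₁, …, r_m)` of `G`. -/
noncomputable def MASet {V : Type*} {n : ℕ} (G : SimpleGraph V) (N : G.edgeSet ≃ Fin n) :
    Set (Submodule ℝ (Fin n → ℝ)) :=
  {H | (∃ (a b : V) (p : G.Walk a b), 0 < p.length ∧ p.IsPath ∧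
          H = hyp (altVec (edgeIdx N p))) ∨
       (∃ (a : V) (p : G.Walk a a), p.IsCycle ∧ Even p.length ∧
          H = hyp (altVec (edgeIdx N p)))}

/-- The value at `t` of the characteristic polynomial of a (central) arrangement, given by
Whitney's formula `χ_A(t) = ∑_{S ⊆ A} (-1)^{|S|} t^{dim ∩ S}`. -/
noncomputable def charPolyEval {M : Type*} [AddCommGroup M] [Module ℝ M]
    (A : Finset (Submodule ℝ M)) (t : ℝ) : ℝ :=
  ∑ S ∈ A.powerset, (-1 : ℝ) ^ S.card * t ^ (Module.finrank ℝ ↥(S.inf id))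

/-- A matching of `G` given as a set of edge numbers (with respect to the numbering `N`):
no two of the corresponding edges share a vertex. -/
def IdxMatching {V : Type*} {n : ℕ} (G : SimpleGraph V) (N : G.edgeSet ≃ Fin n)
    (M : Finset (Fin n)) : Prop :=
  ∀ i ∈ M, ∀ j ∈ M, i ≠ j →
    ∀ v : V, ¬(v ∈ (↑(N.symm i) : Sym2 V) ∧ v ∈ (↑(N.symm j) : Sym2 V))

/-!
Two distinct matchings `M`, `M'` differ on `M Δ M'`, in which every vertex meets at most two
edges, one from each matching. Growing a path inside `M Δ M'` as far as possible therefore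
yields a connected component: an alternating simple path, or an alternating (hence even)
simple cycle. Swapping such a component `C` changes the weight of `M` by `±` the alternating
form of `C`, with a sign that does not depend on the weights, so the change has the same sign
for `a` and for `b`. As `M` is the unique `a`-maximum, removing `C` from `M` loses weight,
hence adding `C` to `M'` gains `b`-weight while moving `M'` closer to `M`; induction on
`|M Δ M'|` finishes the proof.
-/

def SameStrictSign (x y : ℝ) : Prop := (0 < x ∧ 0 < y) ∨ (x < 0 ∧ y < 0)

lemma sameStrictSign_iff_mul_pos {x y : ℝ} : SameStrictSign x y ↔ 0 < x * y :=
  mul_pos_iff.symm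

lemma SameStrictSign.of_mul_left {c x y : ℝ} (h : SameStrictSign (c * x) (c * y)) :
    SameStrictSign x y := by
  rw [sameStrictSign_iff_mul_pos] at h ⊢
  have : 0 < c ^ 2 * (x * y) := by linarith [show c * x * (c * y) = c ^ 2 * (x * y) by ring]
  exact pos_of_mul_pos_right this (sq_nonneg c)

lemma SameStrictSign.pos_of_pos {x y : ℝ} (h : SameStrictSign x y) (hx : 0 < x) : 0 < y := by
  rcases h with h | h
  · exact h.2
  · linarith [h.1]

section SwapGain

variable {α : Type*} [DecidableEq α]

def swapGain (M C : Finset α) (w : α → ℝ) : ℝ :=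
  ∑ i ∈ C, if i ∈ M then w i else -w i

lemma sum_symmDiff_eq_sub_swapGain (M C : Finset α) (w : α → ℝ) :
    ∑ i ∈ symmDiff M C, w i = ∑ i ∈ M, w i - swapGain M C w := by
  rw [swapGain, symmDiff_def, Finset.sup_eq_union, Finset.sum_union disjoint_sdiff_sdiff,
    Finset.sum_ite, Finset.sum_neg_distrib, Finset.sdiff_eq_filter, Finset.sdiff_eq_filter,
    ← Finset.sum_filter_add_sum_filter_not M (· ∈ C), Finset.filter_mem_eq_inter,
    Finset.filter_mem_eq_inter, Finset.inter_comm]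
  ring

lemma swapGain_eq_neg_of_subset_symmDiff {M M' C : Finset α} (hC : C ⊆ symmDiff M M')
    (w : α → ℝ) : swapGain M' C w = -swapGain M C w := by
  rw [swapGain, swapGain, ← Finset.sum_neg_distrib]
  refine Finset.sum_congr rfl fun i hi => ?_
  have := hC hi
  rw [Finset.mem_symmDiff] at this
  rcases this with ⟨h, h'⟩ | ⟨h, h'⟩ <;> simp [h, h']

lemma Finset.sum_lt_of_forall_exists_swap {P : Finset α → Prop} {M : Finset α} (w : α → ℝ)
    (h : ∀ M', P M' → M' ≠ M → ∃ C, C.Nonempty ∧ C ⊆ symmDiff M M' ∧ P (symmDiff M' C) ∧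
      ∑ i ∈ M', w i < ∑ i ∈ symmDiff M' C, w i) :
    ∀ M', P M' → M' ≠ M → ∑ i ∈ M', w i < ∑ i ∈ M, w i := by
  intro M' hM' hne
  induction hk : (symmDiff M M').card using Nat.strong_induction_on generalizing M' with
  | _ k ih =>
    obtain ⟨C, hCne, hCD, hPC, hlt⟩ := h M' hM' hne
    by_cases hM : symmDiff M' C = M
    · rwa [hM] at hlt
    have hcard : (symmDiff M (symmDiff M' C)).card < k := by
      rw [← symmDiff_assoc, symmDiff_of_ge hCD, ← hk]
      exact Finset.card_lt_card (Finset.sdiff_ssubset hCD hCne)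
    exact hlt.trans (ih _ hcard _ hPC hM rfl)

end SwapGain

section Alternating

variable {n : ℕ} (M : Finset (Fin n))

lemma sum_altVec_cons (j : Fin n) (L : List (Fin n)) (w : Fin n → ℝ) :
    ∑ i, altVec (j :: L) i * w i = w j - ∑ i, altVec L i * w i := by
  simp [altVec, sub_mul, Finset.sum_sub_distrib, Pi.single_apply]

lemma sum_altVec_of_isChain (w : Fin n → ℝ) (j : Fin n) (L : List (Fin n))
    (h : (j :: L).IsChain fun i k => i ∈ M ↔ k ∉ M) :
    ∑ i, altVec (j :: L) i * w i =
      (if j ∈ M then 1 else -1) * ((j :: L).map fun i => if i ∈ M then w i else -w i).sum := by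
  induction L generalizing j with
  | nil => by_cases hj : j ∈ M <;> simp [altVec, Pi.single_apply, hj]
  | cons k L ih =>
    rw [List.isChain_cons_cons] at h
    rw [sum_altVec_cons, ih k h.2]
    simp only [List.map_cons, List.sum_cons]
    by_cases hj : j ∈ M
    · simp only [hj, h.1.1 hj, if_true, if_false]; ring
    · simp only [hj, show k ∈ M by tauto, if_true, if_false]; ring

lemma getLast_mem_iff_of_isChain (j : Fin n) (L : List (Fin n))
    (h : (j :: L).IsChain fun i k => i ∈ M ↔ k ∉ M) :
    (j :: L).getLast (List.cons_ne_nil j L) ∈ M ↔ (j ∈ M ↔ Even L.length) := by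
  induction L generalizing j with
  | nil => simp
  | cons k L ih =>
    rw [List.isChain_cons_cons] at h
    rw [List.getLast_cons (List.cons_ne_nil k L), ih k h.2, List.length_cons, Nat.even_add_one]
    tauto

end Alternating

section EdgeIdx

open SimpleGraph

variable {V : Type*} {n : ℕ} {G : SimpleGraph V} (N : G.edgeSet ≃ Fin n)

lemma mem_edgeIdx {x y : V} {p : G.Walk x y} {i : Fin n} :
    i ∈ edgeIdx N p ↔ (N.symm i : Sym2 V) ∈ p.edges := by
  simp only [edgeIdx, List.mem_pmap]
  constructor
  · rintro ⟨e, he, rfl⟩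
    simpa using he
  · exact fun h => ⟨_, h, by simp⟩

lemma length_edgeIdx {x y : V} (p : G.Walk x y) : (edgeIdx N p).length = p.length := by
  simp [edgeIdx]

lemma nodup_edgeIdx {x y : V} {p : G.Walk x y} (h : p.edges.Nodup) : (edgeIdx N p).Nodup :=
  h.pmap fun _ _ _ _ hij => congrArg Subtype.val (N.injective hij)

lemma edgeIdx_cons {x y z : V} (h : G.Adj x y) (p : G.Walk y z) :
    edgeIdx N (Walk.cons h p) = N ⟨s(x, y), h⟩ :: edgeIdx N p := rfl

lemma mem_edgeIdx_reverse {x y : V} {p : G.Walk x y} {i : Fin n} :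
    i ∈ edgeIdx N p.reverse ↔ i ∈ edgeIdx N p := by
  simp [mem_edgeIdx]

lemma mem_head_edgeIdx {x y : V} (p : G.Walk x y) (h : edgeIdx N p ≠ []) :
    x ∈ (N.symm ((edgeIdx N p).head h) : Sym2 V) := by
  simp [edgeIdx, List.head_pmap, Walk.head_edges_eq_mk_start_snd]

lemma mem_getLast_edgeIdx {x y : V} (p : G.Walk x y) (h : edgeIdx N p ≠ []) :
    y ∈ (N.symm ((edgeIdx N p).getLast h) : Sym2 V) := by
  simp [edgeIdx, List.getLast_pmap, Walk.getLast_edges_eq_mk_penultimate_end]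

lemma isChain_edgeIdx {x y : V} (p : G.Walk x y) :
    (edgeIdx N p).IsChain fun i j => ∃ v, v ∈ (N.symm i : Sym2 V) ∧ v ∈ (N.symm j : Sym2 V) := by
  induction p with
  | nil => exact List.IsChain.nil
  | @cons _ w _ h p ih =>
    cases p with
    | nil => exact List.IsChain.singleton _
    | cons h' p' =>
      rw [edgeIdx_cons] at ih ⊢
      exact ih.cons_cons ⟨w, by simp, by simp⟩

lemma exists_adj_of_mem {x : V} {i : Fin n} (hx : x ∈ (N.symm i : Sym2 V)) :
    ∃ z, ∃ h : G.Adj z x, N ⟨s(z, x), h⟩ = i := by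
  obtain ⟨z, hz⟩ := Sym2.mem_iff_exists.mp hx
  have h : G.Adj z x := by
    rw [← G.mem_edgeSet, Sym2.eq_swap, ← hz]
    exact (N.symm i).2
  have he : (⟨s(z, x), h⟩ : G.edgeSet) = N.symm i := Subtype.ext (by simp [hz, Sym2.eq_swap])
  exact ⟨z, h, by rw [he, N.apply_symm_apply]⟩

lemma exists_two_mem_edgeIdx_of_ncard_eq_two {x y v : V} {p : G.Walk x y}
    (h : (p.toSubgraph.neighborSet v).ncard = 2) :
    ∃ i ∈ edgeIdx N p, ∃ j ∈ edgeIdx N p, i ≠ j ∧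
      v ∈ (N.symm i : Sym2 V) ∧ v ∈ (N.symm j : Sym2 V) := by
  obtain ⟨u, w, huw, hS⟩ := Set.ncard_eq_two.mp h
  have hedge : ∀ u ∈ p.toSubgraph.neighborSet v, s(v, u) ∈ p.edges :=
    fun _ hu => Walk.adj_toSubgraph_iff_mem_edges.mp hu
  have hu := hedge u (by simp [hS])
  have hw := hedge w (by simp [hS])
  refine ⟨N ⟨_, p.edges_subset_edgeSet hu⟩, by simp [mem_edgeIdx, hu],
    N ⟨_, p.edges_subset_edgeSet hw⟩, by simp [mem_edgeIdx, hw], ?_, by simp, by simp⟩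
  exact fun hij => huw (Sym2.congr_right.mp (congrArg Subtype.val (N.injective hij)))

lemma SimpleGraph.Walk.IsPath.exists_two_mem_edgeIdx {x y v : V} {p : G.Walk x y} (hp : p.IsPath)
    (hv : v ∈ p.support) (hvx : v ≠ x) (hvy : v ≠ y) :
    ∃ i ∈ edgeIdx N p, ∃ j ∈ edgeIdx N p, i ≠ j ∧
      v ∈ (N.symm i : Sym2 V) ∧ v ∈ (N.symm j : Sym2 V) := by
  obtain ⟨k, rfl, hk⟩ := Walk.mem_support_iff_exists_getVert.mp hv
  have hk0 : k ≠ 0 := by rintro rfl; simp at hvx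
  have hkl : k ≠ p.length := by rintro rfl; simp at hvy
  exact exists_two_mem_edgeIdx_of_ncard_eq_two N
    (hp.ncard_neighborSet_toSubgraph_internal_eq_two hk0 (by omega))

lemma SimpleGraph.Walk.IsCycle.exists_two_mem_edgeIdx {x v : V} {p : G.Walk x x} (hp : p.IsCycle)
    (hv : v ∈ p.support) :
    ∃ i ∈ edgeIdx N p, ∃ j ∈ edgeIdx N p, i ≠ j ∧
      v ∈ (N.symm i : Sym2 V) ∧ v ∈ (N.symm j : Sym2 V) :=
  exists_two_mem_edgeIdx_of_ncard_eq_two N (hp.ncard_neighborSet_toSubgraph_eq_two hv)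

end EdgeIdx

section SymmDiff

variable {V : Type*} {n : ℕ} {G : SimpleGraph V} {N : G.edgeSet ≃ Fin n} {M M' : Finset (Fin n)}

lemma IdxMatching.mem_iff_not_mem_of_mem_symmDiff (hM : IdxMatching G N M)
    (hM' : IdxMatching G N M') {i j : Fin n} (hi : i ∈ symmDiff M M') (hj : j ∈ symmDiff M M')
    (hij : i ≠ j) {v : V} (hvi : v ∈ (N.symm i : Sym2 V)) (hvj : v ∈ (N.symm j : Sym2 V)) :
    i ∈ M ↔ j ∉ M := by
  rw [Finset.mem_symmDiff] at hi hj
  have hMij : i ∈ M → j ∉ M := fun hiM hjM => hM i hiM j hjM hij v ⟨hvi, hvj⟩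
  have hM'ij : i ∈ M' → j ∉ M' := fun hiM' hjM' => hM' i hiM' j hjM' hij v ⟨hvi, hvj⟩
  tauto

lemma IdxMatching.eq_or_eq_of_mem_symmDiff (hM : IdxMatching G N M)
    (hM' : IdxMatching G N M') {i j k : Fin n} (hi : i ∈ symmDiff M M')
    (hj : j ∈ symmDiff M M') (hk : k ∈ symmDiff M M') (hij : i ≠ j) {v : V}
    (hvi : v ∈ (N.symm i : Sym2 V)) (hvj : v ∈ (N.symm j : Sym2 V))
    (hvk : v ∈ (N.symm k : Sym2 V)) : k = i ∨ k = j := by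
  by_contra! h
  have := hM.mem_iff_not_mem_of_mem_symmDiff hM' hi hj hij hvi hvj
  have := hM.mem_iff_not_mem_of_mem_symmDiff hM' hk hi h.1 hvk hvi
  have := hM.mem_iff_not_mem_of_mem_symmDiff hM' hk hj h.2 hvk hvj
  tauto

lemma IdxMatching.isChain_alternating (hM : IdxMatching G N M) (hM' : IdxMatching G N M') :
    ∀ {L : List (Fin n)}, L.Nodup → (∀ i ∈ L, i ∈ symmDiff M M') →
      L.IsChain (fun i j => ∃ v, v ∈ (N.symm i : Sym2 V) ∧ v ∈ (N.symm j : Sym2 V)) →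
      L.IsChain (fun i j => i ∈ M ↔ j ∉ M)
  | [], _, _, _ => .nil
  | [_], _, _, _ => .singleton _
  | i :: j :: L, hnd, hD, hch => by
    rw [List.isChain_cons_cons] at hch ⊢
    obtain ⟨v, hvi, hvj⟩ := hch.1
    have hij : i ≠ j := fun h => (List.nodup_cons.mp hnd).1 (h ▸ List.mem_cons_self)
    exact ⟨hM.mem_iff_not_mem_of_mem_symmDiff hM' (hD i (by simp)) (hD j (by simp)) hij hvi hvj,
      hM.isChain_alternating hM' hnd.of_cons (fun k hk => hD k (List.mem_cons_of_mem _ hk)) hch.2⟩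

variable (N) in
/-- `C` is a union of connected components of the edge set `D`. -/
def AdjClosed (D C : Finset (Fin n)) : Prop :=
  ∀ v : V, ∀ j ∈ C, v ∈ (N.symm j : Sym2 V) → ∀ i ∈ D, v ∈ (N.symm i : Sym2 V) → i ∈ C

lemma IdxMatching.symmDiff_of_adjClosed (hM : IdxMatching G N M) (hM' : IdxMatching G N M')
    {C : Finset (Fin n)} (hCD : C ⊆ symmDiff M M') (hC : AdjClosed N (symmDiff M M') C) :
    IdxMatching G N (symmDiff M C) := by
  have hCM' : ∀ j ∈ C, j ∉ M → j ∈ M' := fun j hj hjM => by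
    have := hCD hj
    rw [Finset.mem_symmDiff] at this
    tauto
  have mixed : ∀ i j : Fin n, i ∈ M → i ∉ C → j ∈ C → j ∉ M → ∀ v : V,
      ¬(v ∈ (N.symm i : Sym2 V) ∧ v ∈ (N.symm j : Sym2 V)) := by
    rintro i j hiM hiC hjC hjM v ⟨hvi, hvj⟩
    have hij : i ≠ j := fun h => hjM (h ▸ hiM)
    by_cases hiM' : i ∈ M'
    · exact hM' i hiM' j (hCM' j hjC hjM) hij v ⟨hvi, hvj⟩
    · exact hiC (hC v j hjC hvj i (Finset.mem_symmDiff.mpr (.inl ⟨hiM, hiM'⟩)) hvi)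
  intro i hi j hj hij v hv
  rw [Finset.mem_symmDiff] at hi hj
  rcases hi with ⟨hiM, hiC⟩ | ⟨hiC, hiM⟩ <;> rcases hj with ⟨hjM, hjC⟩ | ⟨hjC, hjM⟩
  · exact hM i hiM j hjM hij v hv
  · exact mixed i j hiM hiC hjC hjM v hv
  · exact mixed j i hjM hjC hiC hiM v hv.symm
  · exact hM' i (hCM' i hiC hiM) j (hCM' j hjC hjM) hij v hv

lemma IdxMatching.adjClosed_of_forall (hM : IdxMatching G N M) (hM' : IdxMatching G N M')
    {C : Finset (Fin n)} (hCD : C ⊆ symmDiff M M')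
    (h : ∀ v : V, ∀ j ∈ C, v ∈ (N.symm j : Sym2 V) →
      (∀ i ∈ symmDiff M M', v ∈ (N.symm i : Sym2 V) → i ∈ C) ∨
      ∃ i ∈ C, ∃ k ∈ C, i ≠ k ∧ v ∈ (N.symm i : Sym2 V) ∧ v ∈ (N.symm k : Sym2 V)) :
    AdjClosed N (symmDiff M M') C := by
  intro v j hj hvj i hi hvi
  obtain hsat | ⟨k, hk, l, hl, hkl, hvk, hvl⟩ := h v j hj hvj
  · exact hsat i hi hvi
  · obtain rfl | rfl := hM.eq_or_eq_of_mem_symmDiff hM' (hCD hk) (hCD hl) hi hkl hvk hvl hvi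
    exacts [hk, hl]

lemma IdxMatching.even_length_of_isCycle (hM : IdxMatching G N M) (hM' : IdxMatching G N M')
    {x : V} {p : G.Walk x x} (hp : p.IsCycle) (hD : ∀ i ∈ edgeIdx N p, i ∈ symmDiff M M') :
    Even p.length := by
  have hlen := length_edgeIdx N p
  have hne : edgeIdx N p ≠ [] := by
    rw [← List.length_pos_iff, hlen]
    exact hp.three_le_length.trans_lt' (by norm_num)
  have hx_head := mem_head_edgeIdx N p hne
  have hx_last := mem_getLast_edgeIdx N p hne
  have hnd := nodup_edgeIdx N hp.edges_nodup
  have hchain := hM.isChain_alternating hM' hnd hD (isChain_edgeIdx N p)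
  obtain ⟨j, L, hL⟩ := List.exists_cons_of_ne_nil hne
  have hL0 : L ≠ [] := by
    rintro rfl
    have := hp.three_le_length
    simp only [hL, List.length_singleton] at hlen
    omega
  simp only [hL, List.head_cons, List.getLast_cons hL0] at hx_head hx_last hchain hnd hD
  have hj_last : j ≠ L.getLast hL0 :=
    fun h => (List.nodup_cons.mp hnd).1 (h ▸ List.getLast_mem hL0)
  have hends := hM.mem_iff_not_mem_of_mem_symmDiff hM' (hD j (by simp))
    (hD _ (List.mem_cons_of_mem _ (List.getLast_mem hL0))) hj_last hx_head hx_last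
  have hparity := getLast_mem_iff_of_isChain M j L hchain
  rw [List.getLast_cons hL0] at hparity
  rw [← hlen, hL, List.length_cons, Nat.even_add_one]
  tauto

end SymmDiff

section Components

open SimpleGraph

variable {V : Type*} {n : ℕ} {G : SimpleGraph V} {N : G.edgeSet ≃ Fin n}

variable (G N) in
def SameMARegion (a b : Fin n → ℝ) : Prop :=
  (∀ (x y : V) (p : G.Walk x y), 0 < p.length → p.IsPath →
    SameStrictSign (∑ i, altVec (edgeIdx N p) i * a i) (∑ i, altVec (edgeIdx N p) i * b i)) ∧
  (∀ (x : V) (p : G.Walk x x), p.IsCycle → Even p.length →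
    SameStrictSign (∑ i, altVec (edgeIdx N p) i * a i) (∑ i, altVec (edgeIdx N p) i * b i))

variable (N) in
def IsSignedSwap (M M' C : Finset (Fin n)) (a b : Fin n → ℝ) : Prop :=
  C.Nonempty ∧ C ⊆ symmDiff M M' ∧ AdjClosed N (symmDiff M M') C ∧
    SameStrictSign (swapGain M C a) (swapGain M C b)

variable {M M' : Finset (Fin n)} {a b : Fin n → ℝ}

lemma IdxMatching.isSignedSwap_of_walk (hM : IdxMatching G N M) (hM' : IdxMatching G N M')
    {x y : V} {p : G.Walk x y} (hp : p.edges.Nodup) (hlen : 0 < p.length)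
    (hD : ∀ i ∈ edgeIdx N p, i ∈ symmDiff M M')
    (hC : AdjClosed N (symmDiff M M') (edgeIdx N p).toFinset)
    (hs : SameStrictSign (∑ i, altVec (edgeIdx N p) i * a i) (∑ i, altVec (edgeIdx N p) i * b i)) :
    IsSignedSwap N M M' (edgeIdx N p).toFinset a b := by
  have hnd := nodup_edgeIdx N hp
  have hchain := hM.isChain_alternating hM' hnd hD (isChain_edgeIdx N p)
  obtain ⟨j, L, hL⟩ := List.exists_cons_of_ne_nil
    (List.length_pos_iff.mp ((length_edgeIdx N p).symm ▸ hlen))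
  refine ⟨⟨j, by simp [hL]⟩, fun i hi => hD i (List.mem_toFinset.mp hi), hC, ?_⟩
  rw [hL] at hs hchain hnd ⊢
  simp only [sum_altVec_of_isChain M _ j L hchain] at hs
  simpa only [swapGain, List.sum_toFinset _ hnd] using hs.of_mul_left

lemma IdxMatching.isSignedSwap_of_isPath (hreg : SameMARegion G N a b)
    (hM : IdxMatching G N M) (hM' : IdxMatching G N M') {x y : V} {p : G.Walk x y}
    (hp : p.IsPath) (hlen : 0 < p.length) (hD : ∀ i ∈ edgeIdx N p, i ∈ symmDiff M M')
    (hsat : ∀ i ∈ symmDiff M M', x ∈ (N.symm i : Sym2 V) ∨ y ∈ (N.symm i : Sym2 V) →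
      i ∈ edgeIdx N p) :
    IsSignedSwap N M M' (edgeIdx N p).toFinset a b := by
  refine hM.isSignedSwap_of_walk hM' hp.edges_nodup hlen hD
    (hM.adjClosed_of_forall hM' (fun i hi => hD i (List.mem_toFinset.mp hi)) ?_)
    (hreg.1 x y p hlen hp)
  intro v j hj hvj
  simp only [List.mem_toFinset]
  have hv : v ∈ p.support := Walk.mem_support_of_mem_edges (mem_edgeIdx N |>.mp
    (List.mem_toFinset.mp hj)) hvj
  by_cases hend : v = x ∨ v = y
  · left
    rintro i hi hvi
    exact hsat i hi (by rcases hend with rfl | rfl <;> simp [hvi])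
  · right
    rw [not_or] at hend
    exact hp.exists_two_mem_edgeIdx N hv hend.1 hend.2

lemma IdxMatching.isSignedSwap_of_isCycle (hreg : SameMARegion G N a b)
    (hM : IdxMatching G N M) (hM' : IdxMatching G N M') {x : V} {p : G.Walk x x}
    (hp : p.IsCycle) (hD : ∀ i ∈ edgeIdx N p, i ∈ symmDiff M M') :
    IsSignedSwap N M M' (edgeIdx N p).toFinset a b := by
  refine hM.isSignedSwap_of_walk hM' hp.edges_nodup (hp.three_le_length.trans_lt' (by norm_num))
    hD (hM.adjClosed_of_forall hM' (fun i hi => hD i (List.mem_toFinset.mp hi)) ?_)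
    (hreg.2 x p hp (hM.even_length_of_isCycle hM' hp hD))
  intro v j hj hvj
  simp only [List.mem_toFinset]
  exact .inr (hp.exists_two_mem_edgeIdx N (Walk.mem_support_of_mem_edges (mem_edgeIdx N |>.mp
    (List.mem_toFinset.mp hj)) hvj))

lemma IdxMatching.exists_isSignedSwap_or_extend (hreg : SameMARegion G N a b)
    (hM : IdxMatching G N M) (hM' : IdxMatching G N M') {x y : V} {p : G.Walk x y}
    (hp : p.IsPath) (hD : ∀ i ∈ edgeIdx N p, i ∈ symmDiff M M') {i : Fin n}
    (hi : i ∈ symmDiff M M') (hip : i ∉ edgeIdx N p) (hx : x ∈ (N.symm i : Sym2 V)) :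
    (∃ C, IsSignedSwap N M M' C a b) ∨
      ∃ (z : V) (q : G.Walk z y), q.IsPath ∧ q.length = p.length + 1 ∧
        ∀ k ∈ edgeIdx N q, k ∈ symmDiff M M' := by
  obtain ⟨z, h, rfl⟩ := exists_adj_of_mem N hx
  have hD' : ∀ k ∈ edgeIdx N (Walk.cons h p), k ∈ symmDiff M M' := by
    rw [edgeIdx_cons]
    exact List.forall_mem_cons.mpr ⟨hi, hD⟩
  by_cases hz : z ∈ p.support
  · left
    obtain rfl : z = y := by
      -- an interior vertex of `p` already meets two edges of `M Δ M'`
      by_contra hzy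
      obtain ⟨k, hk, l, hl, hkl, hzk, hzl⟩ := hp.exists_two_mem_edgeIdx N hz h.ne hzy
      obtain rfl | rfl := hM.eq_or_eq_of_mem_symmDiff hM' (hD k hk) (hD l hl) hi hkl hzk hzl
        (by simp)
      exacts [hip hk, hip hl]
    have hcyc : (Walk.cons h p).IsCycle := by
      refine Walk.cons_isCycle_iff p h |>.mpr ⟨hp, fun he => hip ?_⟩
      exact mem_edgeIdx N |>.mpr (by simpa using he)
    exact ⟨_, hM.isSignedSwap_of_isCycle hreg hM' hcyc hD'⟩
  · exact .inr ⟨z, Walk.cons h p, Walk.cons_isPath_iff h p |>.mpr ⟨hp, hz⟩, rfl, hD'⟩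

lemma IdxMatching.exists_isSignedSwap_of_isPath (hreg : SameMARegion G N a b)
    (hM : IdxMatching G N M) (hM' : IdxMatching G N M') (m : ℕ) {x y : V} {p : G.Walk x y}
    (hp : p.IsPath) (hlen : 0 < p.length) (hD : ∀ i ∈ edgeIdx N p, i ∈ symmDiff M M')
    (hm : (symmDiff M M').card ≤ m + p.length) :
    ∃ C, IsSignedSwap N M M' C a b := by
  induction m generalizing x y p with
  | zero =>
    have hDp : symmDiff M M' = (edgeIdx N p).toFinset := by
      refine (Finset.eq_of_subset_of_card_le (fun i hi => hD i (List.mem_toFinset.mp hi)) ?_).symm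
      rw [List.toFinset_card_of_nodup (nodup_edgeIdx N hp.edges_nodup), length_edgeIdx]
      omega
    refine ⟨_, hM.isSignedSwap_of_isPath hreg hM' hp hlen hD fun i hi _ => ?_⟩
    rw [hDp] at hi
    exact List.mem_toFinset.mp hi
  | succ m ih =>
    by_cases hsat : ∀ i ∈ symmDiff M M', x ∈ (N.symm i : Sym2 V) ∨ y ∈ (N.symm i : Sym2 V) →
        i ∈ edgeIdx N p
    · exact ⟨_, hM.isSignedSwap_of_isPath hreg hM' hp hlen hD hsat⟩
    simp only [not_forall, exists_prop] at hsat
    obtain ⟨i, hi, hx | hy, hip⟩ := hsat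
    · obtain hC | ⟨z, q, hq, hqlen, hqD⟩ :=
        hM.exists_isSignedSwap_or_extend hreg hM' hp hD hi hip hx
      exacts [hC, ih hq (by omega) hqD (by omega)]
    · obtain hC | ⟨z, q, hq, hqlen, hqD⟩ :=
        hM.exists_isSignedSwap_or_extend hreg hM' hp.reverse
          (fun k hk => hD k (mem_edgeIdx_reverse N |>.mp hk)) hi
          (fun h => hip (mem_edgeIdx_reverse N |>.mp h)) hy
      exacts [hC, ih hq (by omega) hqD (by rw [hqlen, Walk.length_reverse]; omega)]

lemma IdxMatching.exists_isSignedSwap (hreg : SameMARegion G N a b)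
    (hM : IdxMatching G N M) (hM' : IdxMatching G N M') (hne : M ≠ M') :
    ∃ C, IsSignedSwap N M M' C a b := by
  obtain ⟨i, hi⟩ : (symmDiff M M').Nonempty :=
    Finset.nonempty_iff_ne_empty.mpr fun h => hne (symmDiff_eq_bot.mp h)
  obtain ⟨z, h, hzi⟩ := exists_adj_of_mem N (Sym2.out_fst_mem (N.symm i : Sym2 V))
  refine hM.exists_isSignedSwap_of_isPath hreg hM' _ (Walk.IsPath.of_adj h) (by simp) ?_
    (Nat.le_add_right _ _)
  simpa [Adj.toWalk, edgeIdx_cons, hzi, edgeIdx] using hi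

end Components

theorem same_region_same_max_matching_general {V : Type*} {n : ℕ}
    (G : SimpleGraph V) (N : G.edgeSet ≃ Fin n) (a b : Fin n → ℝ)
    (hregion :
      (∀ (x y : V) (p : G.Walk x y), 0 < p.length → p.IsPath →
        ((0 < ∑ i, altVec (edgeIdx N p) i * a i ∧ 0 < ∑ i, altVec (edgeIdx N p) i * b i) ∨
         (∑ i, altVec (edgeIdx N p) i * a i < 0 ∧ ∑ i, altVec (edgeIdx N p) i * b i < 0))) ∧
      (∀ (x : V) (p : G.Walk x x), p.IsCycle → Even p.length →
        ((0 < ∑ i, altVec (edgeIdx N p) i * a i ∧ 0 < ∑ i, altVec (edgeIdx N p) i * b i) ∨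
         (∑ i, altVec (edgeIdx N p) i * a i < 0 ∧ ∑ i, altVec (edgeIdx N p) i * b i < 0))))
    (M : Finset (Fin n)) (hM : IdxMatching G N M)
    (hmaxa : ∀ M', IdxMatching G N M' → M' ≠ M → ∑ i ∈ M', a i < ∑ i ∈ M, a i) :
    ∀ M', IdxMatching G N M' → M' ≠ M → ∑ i ∈ M', b i < ∑ i ∈ M, b i := by
  refine Finset.sum_lt_of_forall_exists_swap b fun M' hM' hne => ?_
  obtain ⟨C, hCne, hCD, hC, hsign⟩ := hM.exists_isSignedSwap hregion hM' hne.symm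
  have hC' : AdjClosed N (symmDiff M' M) C := symmDiff_comm M M' ▸ hC
  have hgain_a : 0 < swapGain M C a := by
    have := hmaxa _ (hM.symmDiff_of_adjClosed hM' hCD hC) (by simpa using hCne.ne_empty)
    rw [sum_symmDiff_eq_sub_swapGain] at this
    linarith
  refine ⟨C, hCne, hCD, hM'.symmDiff_of_adjClosed hM (symmDiff_comm M M' ▸ hCD) hC', ?_⟩
  rw [sum_symmDiff_eq_sub_swapGain, swapGain_eq_neg_of_subset_symmDiff hCD]
  linarith [hsign.pos_of_pos hgain_a]

/-- If the weight vectors `a` and `b` lie in the same region of the matching arrangement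
`MA(G, N)` (every alternating form attached to a simple path or even simple cycle takes the
same strict sign at `a` and at `b`), and `M` is the unique maximum-weight matching for the
weights `a`, then `M` is also the unique maximum-weight matching for the weights `b`. -/
theorem same_region_same_max_matching {V : Type*} [Fintype V] [DecidableEq V] {n : ℕ}
    (G : SimpleGraph V) (N : G.edgeSet ≃ Fin n) (a b : Fin n → ℝ)
    (hregion :
      (∀ (x y : V) (p : G.Walk x y), 0 < p.length → p.IsPath →
        ((0 < ∑ i, altVec (edgeIdx N p) i * a i ∧ 0 < ∑ i, altVec (edgeIdx N p) i * b i) ∨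
         (∑ i, altVec (edgeIdx N p) i * a i < 0 ∧ ∑ i, altVec (edgeIdx N p) i * b i < 0))) ∧
      (∀ (x : V) (p : G.Walk x x), p.IsCycle → Even p.length →
        ((0 < ∑ i, altVec (edgeIdx N p) i * a i ∧ 0 < ∑ i, altVec (edgeIdx N p) i * b i) ∨
         (∑ i, altVec (edgeIdx N p) i * a i < 0 ∧ ∑ i, altVec (edgeIdx N p) i * b i < 0))))
    (M : Finset (Fin n)) (hM : IdxMatching G N M)
    (hmaxa : ∀ M', IdxMatching G N M' → M' ≠ M → ∑ i ∈ M', a i < ∑ i ∈ M, a i) :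
    ∀ M', IdxMatching G N M' → M' ≠ M → ∑ i ∈ M', b i < ∑ i ∈ M, b i :=
  same_region_same_max_matching_general G N a b hregion M hM hmaxa
end

section
/- Let G be a tree with n edges. Then the characteristic polynomial of the matching arrangement MA(G) equals (t−1)(t−2)⋯(t−n). -/
open Finset

/-!
A tree `G` is bipartite; let `σ = ±1` be the sign of a proper 2-coloring of its vertices. The
linear map `ψ : ℝ^V → ℝ^E`, `ψ(y)_{uv} = σ_u y_u + σ_v y_v`, telescopes along any path from `a`
to `b`: the alternating sum of its coordinates is `σ_a (y_a - y_b)`. Hence `ψ` pulls the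
hyperplane of the path back to the braid hyperplane `y_a = y_b`. Since the tree has `n + 1`
vertices and `ker ψ` is the line of constants, `ψ` is surjective, so pulling back raises every
dimension in Whitney's formula by one: `t χ_{MA(G)}(t) = χ_{K_{n+1}}(t)`, the characteristic
polynomial of the braid arrangement. At `t ∈ ℕ` the latter counts the injective `t`-colorings of
the `n + 1` vertices by inclusion–exclusion, giving `t (t - 1) ⋯ (t - n)`.
-/

theorem Finset.powerset_filter {α : Type*} (s : Finset α) (p : α → Prop) [DecidablePred p]
    [DecidablePred fun T : Finset α => ∀ a ∈ T, p a] :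
    (s.filter p).powerset = s.powerset.filter (fun T => ∀ a ∈ T, p a) := by
  ext T
  simp only [Finset.mem_powerset, Finset.mem_filter, Finset.subset_iff]
  grind

open Polynomial

section Arrangement

variable {ι M N : Type*} [AddCommGroup M] [Module ℝ M] [AddCommGroup N] [Module ℝ N]

noncomputable def arrangementCharPoly (s : Finset ι) (H : ι → Submodule ℝ M) : ℝ[X] :=
  ∑ T ∈ s.powerset, (-1) ^ T.card * X ^ Module.finrank ℝ ↥(T.inf H)

theorem eval_arrangementCharPoly_id (A : Finset (Submodule ℝ M)) (t : ℝ) :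
    (arrangementCharPoly A id).eval t = charPolyEval A t := by
  simp [arrangementCharPoly, charPolyEval, eval_finsetSum]

theorem arrangementCharPoly_image [DecidableEq (Submodule ℝ M)] {s : Finset ι}
    {H : ι → Submodule ℝ M} (hH : Set.InjOn H s) :
    arrangementCharPoly (s.image H) id = arrangementCharPoly s H := by
  rw [arrangementCharPoly, Finset.powerset_image,
    Finset.sum_image (Finset.image_injOn_powerset_of_injOn hH)]
  refine Finset.sum_congr rfl fun T hT => ?_
  rw [Finset.card_image_of_injOn (hH.mono (Finset.mem_powerset.1 hT)), Finset.inf_image]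
  rfl

theorem Submodule.finrank_comap_of_surjective [FiniteDimensional ℝ M] {f : M →ₗ[ℝ] N}
    (hf : Function.Surjective f) (W : Submodule ℝ N) :
    Module.finrank ℝ ↥(W.comap f) = Module.finrank ℝ ↥W + Module.finrank ℝ ↥(LinearMap.ker f) := by
  have h := LinearMap.finrank_range_add_finrank_ker (f.domRestrict (W.comap f))
  rw [LinearMap.range_domRestrict, Submodule.map_comap_eq_of_surjective hf,
    LinearMap.ker_domRestrict,
    (Submodule.comapSubtypeEquivOfLe (LinearMap.ker_le_comap f)).finrank_eq] at h
  exact h.symm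

theorem arrangementCharPoly_comap [FiniteDimensional ℝ M] {f : M →ₗ[ℝ] N}
    (hf : Function.Surjective f) (s : Finset ι) (H : ι → Submodule ℝ N) :
    arrangementCharPoly s (fun i => (H i).comap f)
      = X ^ Module.finrank ℝ ↥(LinearMap.ker f) * arrangementCharPoly s H := by
  rw [arrangementCharPoly, arrangementCharPoly, Finset.mul_sum]
  refine Finset.sum_congr rfl fun T _ => ?_
  rw [← Submodule.comap_finsetInf, Submodule.finrank_comap_of_surjective hf, pow_add]
  ring

end Arrangement

section Braid

variable {V : Type*}

def braidHyp (e : Sym2 V) : Submodule ℝ (V → ℝ) where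
  carrier := {y | (e.map y).IsDiag}
  add_mem' := by
    induction e using Sym2.ind
    simp_all [Sym2.mk_isDiag_iff]
  zero_mem' := by
    induction e using Sym2.ind
    simp [Sym2.mk_isDiag_iff]
  smul_mem' := by
    induction e using Sym2.ind
    simp_all [Sym2.mk_isDiag_iff]

@[simp] theorem mem_braidHyp_mk {y : V → ℝ} {a b : V} : y ∈ braidHyp s(a, b) ↔ y a = y b :=
  Sym2.mk_isDiag_iff

theorem single_mem_braidHyp_iff [DecidableEq V] {a : V} {e : Sym2 V} (he : ¬e.IsDiag) :
    Pi.single a 1 ∈ braidHyp e ↔ a ∉ e := by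
  induction e using Sym2.ind with
  | _ c d =>
    rw [Sym2.mk_isDiag_iff] at he
    simp only [mem_braidHyp_mk, Sym2.mem_iff, Pi.single_apply]
    grind

theorem braidHyp_injOn : Set.InjOn (braidHyp (V := V)) {e | ¬e.IsDiag} := by
  classical
  intro e he e' he' h
  ext a
  rw [← not_iff_not, ← single_mem_braidHyp_iff he, ← single_mem_braidHyp_iff he', h]

theorem forall_mem_isDiag_map_iff {β : Type*} (T : Finset (Sym2 V)) (f : V → β) :
    (∀ e ∈ T, (e.map f).IsDiag) ↔ ∀ u v, s(u, v) ∈ T → f u = f v := by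
  refine ⟨fun h u v huv => Sym2.mk_isDiag_iff.1 (h _ huv), fun h e he => ?_⟩
  induction e using Sym2.ind with
  | _ u v => exact Sym2.mk_isDiag_iff.2 (h u v he)

theorem range_comp_quotMk {β : Type*} (r : V → V → Prop) :
    Set.range (fun g : Quot r → β => g ∘ Quot.mk r) = {f | ∀ u v, r u v → f u = f v} := by
  ext f
  refine ⟨?_, fun hf => ⟨Quot.lift f hf, rfl⟩⟩
  rintro ⟨g, rfl⟩ u v huv
  exact congrArg g (Quot.sound huv)

/-- Both sides count the functions on the classes of the equivalence generated by `T`. -/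
theorem card_forall_mem_isDiag_map [Finite V] (T : Finset (Sym2 V)) (α : Type*) :
    Nat.card {f : V → α // ∀ e ∈ T, (e.map f).IsDiag}
      = Nat.card α ^ Module.finrank ℝ ↥(T.inf braidHyp) := by
  let r : V → V → Prop := fun u v => s(u, v) ∈ T
  have : Fintype (Quot r) := Fintype.ofFinite _
  have hinf : T.inf braidHyp = LinearMap.range (LinearMap.funLeft ℝ ℝ (Quot.mk r)) := by
    ext y
    rw [Submodule.mem_finsetInf, LinearMap.mem_range]
    exact (forall_mem_isDiag_map_iff T y).trans (Set.ext_iff.1 (range_comp_quotMk r) y).symm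
  have hcolor : {f : V → α // ∀ e ∈ T, (e.map f).IsDiag} ≃ (Quot r → α) := by
    refine ((Equiv.ofInjective (fun g : Quot r → α => g ∘ Quot.mk r)
      Quot.mk_surjective.injective_comp_right).trans (Equiv.subtypeEquivRight fun f => ?_)).symm
    exact (Set.ext_iff.1 (range_comp_quotMk r) f).trans (forall_mem_isDiag_map_iff T f).symm
  rw [Nat.card_congr hcolor, Nat.card_fun, hinf, LinearMap.finrank_range_of_inj
    (LinearMap.funLeft_injective_of_surjective ℝ ℝ _ Quot.mk_surjective),
    Module.finrank_fintype_fun_eq_card, Nat.card_eq_fintype_card (α := Quot r)]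

theorem sum_powerset_neg_one_pow_mul_card_forall_isDiag [Finite V] (s : Finset (Sym2 V))
    (α : Type*) [Finite α] :
    ∑ T ∈ s.powerset, (-1 : ℤ) ^ T.card * Nat.card {f : V → α // ∀ e ∈ T, (e.map f).IsDiag}
      = Nat.card {f : V → α // ∀ e ∈ s, ¬(e.map f).IsDiag} := by
  classical
  have := Fintype.ofFinite V
  have := Fintype.ofFinite α
  simp only [Nat.card_eq_fintype_card, Fintype.card_subtype, Finset.natCast_card_filter,
    Finset.mul_sum]
  rw [Finset.sum_comm]
  refine Finset.sum_congr rfl fun f _ => ?_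
  simp only [mul_ite, mul_one, mul_zero]
  rw [← Finset.sum_filter]
  convert Finset.sum_powerset_neg_one_pow_card (x := s.filter fun e => (e.map f).IsDiag) using 2
  · exact (Finset.powerset_filter _ _).symm
  · exact Finset.filter_eq_empty_iff.symm

theorem eval_natCast_arrangementCharPoly_braidHyp [Finite V] (s : Finset (Sym2 V)) (t : ℕ) :
    (arrangementCharPoly s braidHyp).eval (t : ℝ)
      = Nat.card {f : V → Fin t // ∀ e ∈ s, ¬(e.map f).IsDiag} := by
  have h := congrArg (Int.cast : ℤ → ℝ) (sum_powerset_neg_one_pow_mul_card_forall_isDiag s (Fin t))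
  push_cast at h
  simp [← h, arrangementCharPoly, eval_finsetSum, card_forall_mem_isDiag_map]

theorem injective_iff_forall_not_isDiag_map {β : Type*} {f : V → β} :
    Function.Injective f ↔ ∀ e : Sym2 V, ¬e.IsDiag → ¬(e.map f).IsDiag := by
  refine ⟨fun hf e => (Sym2.isDiag_map hf).not.2, fun h a b hab => ?_⟩
  by_contra hne
  exact h s(a, b) (Sym2.mk_isDiag_iff.not.2 hne) (Sym2.mk_isDiag_iff.2 hab)

theorem arrangementCharPoly_edgeFinset_top [Fintype V] [DecidableEq V] :
    arrangementCharPoly (⊤ : SimpleGraph V).edgeFinset braidHyp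
      = descPochhammer ℝ (Fintype.card V) := by
  refine Polynomial.eq_of_infinite_eval_eq _ _ <|
    (Set.infinite_range_of_injective Nat.cast_injective).mono ?_
  rintro _ ⟨t, rfl⟩
  have hproper : ∀ f : V → Fin t,
      (∀ e ∈ (⊤ : SimpleGraph V).edgeFinset, ¬(e.map f).IsDiag) ↔ Function.Injective f := by
    simp [injective_iff_forall_not_isDiag_map]
  rw [Set.mem_ofPred_eq, eval_natCast_arrangementCharPoly_braidHyp,
    Nat.card_congr ((Equiv.subtypeEquivRight hproper).trans
      (Equiv.subtypeInjectiveEquivEmbedding _ _)),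
    Nat.card_eq_fintype_card, Fintype.card_embedding_eq, Fintype.card_fin,
    descPochhammer_eval_eq_descFactorial]

end Braid

theorem mem_hyp {n : ℕ} {v x : Fin n → ℝ} : x ∈ hyp v ↔ v ⬝ᵥ x = 0 := by
  simp [hyp, dotProduct]

theorem altVec_cons_dotProduct {n : ℕ} (i : Fin n) (l : List (Fin n)) (x : Fin n → ℝ) :
    altVec (i :: l) ⬝ᵥ x = x i - altVec l ⬝ᵥ x := by
  simp [altVec, sub_dotProduct, single_dotProduct]

namespace SimpleGraph

variable {V : Type*} {G : SimpleGraph V}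

theorem edgeIdx_cons {n : ℕ} (N : G.edgeSet ≃ Fin n) {a b c : V} (h : G.Adj a b)
    (p : G.Walk b c) : edgeIdx N (Walk.cons h p) = N ⟨s(a, b), h⟩ :: edgeIdx N p := by
  simp [edgeIdx]

theorem IsTree.card_eq_of_edgeSet_equiv [Fintype V] {n : ℕ} (hG : G.IsTree)
    (N : G.edgeSet ≃ Fin n) : Fintype.card V = n + 1 := by
  have : Fintype G.edgeSet := Fintype.ofEquiv _ N.symm
  rw [← hG.card_edgeFinset, edgeFinset_card, Fintype.card_congr N, Fintype.card_fin]

namespace Coloring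

variable (c : G.Coloring (Fin 2))

noncomputable def sign (v : V) : ℝ := (-1) ^ (c v : ℕ)

theorem sign_ne_zero (v : V) : c.sign v ≠ 0 :=
  pow_ne_zero _ (by norm_num)

theorem sign_eq_neg_of_adj {u v : V} (h : G.Adj u v) : c.sign u = -c.sign v := by
  have huv := c.valid h
  unfold sign
  generalize c u = i at huv ⊢
  generalize c v = j at huv ⊢
  fin_cases i <;> fin_cases j <;> simp_all

noncomputable def edgeFunctional (e : Sym2 V) : (V → ℝ) →ₗ[ℝ] ℝ :=
  Sym2.lift ⟨fun u v => c.sign u • LinearMap.proj u + c.sign v • LinearMap.proj v,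
    fun _ _ => add_comm _ _⟩ e

noncomputable def signedEdgeMap {n : ℕ} (N : G.edgeSet ≃ Fin n) : (V → ℝ) →ₗ[ℝ] (Fin n → ℝ) :=
  LinearMap.pi fun i => c.edgeFunctional (N.symm i)

variable {n : ℕ} (N : G.edgeSet ≃ Fin n)

@[simp] theorem signedEdgeMap_apply_mk (y : V → ℝ) {u v : V} (h : G.Adj u v) :
    c.signedEdgeMap N y (N ⟨s(u, v), h⟩) = c.sign u * y u + c.sign v * y v := by
  simp [signedEdgeMap, edgeFunctional]

theorem altVec_edgeIdx_dotProduct_signedEdgeMap {a b : V} (p : G.Walk a b) (y : V → ℝ) :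
    altVec (edgeIdx N p) ⬝ᵥ c.signedEdgeMap N y = c.sign a * (y a - y b) := by
  induction p with
  | nil => simp [edgeIdx, altVec]
  | cons h p ih =>
    rw [edgeIdx_cons, altVec_cons_dotProduct, ih, signedEdgeMap_apply_mk,
      c.sign_eq_neg_of_adj h]
    ring

theorem comap_signedEdgeMap_hyp {a b : V} (p : G.Walk a b) :
    (hyp (altVec (edgeIdx N p))).comap (c.signedEdgeMap N) = braidHyp s(a, b) := by
  ext y
  simp [mem_hyp, altVec_edgeIdx_dotProduct_signedEdgeMap, c.sign_ne_zero, sub_eq_zero]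

theorem signedEdgeMap_one : c.signedEdgeMap N 1 = 0 := by
  funext i
  obtain ⟨⟨e, he⟩, rfl⟩ := N.surjective i
  induction e using Sym2.ind with
  | _ u v =>
    rw [c.signedEdgeMap_apply_mk N 1 he, c.sign_eq_neg_of_adj he]
    simp

theorem ker_signedEdgeMap (hG : G.Connected) :
    LinearMap.ker (c.signedEdgeMap N) = Submodule.span ℝ {1} := by
  ext y
  rw [LinearMap.mem_ker, Submodule.mem_span_singleton]
  constructor
  · intro hy
    obtain ⟨r⟩ := hG.nonempty
    refine ⟨y r, funext fun v => ?_⟩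
    obtain ⟨p⟩ := hG.preconnected r v
    have hp : y ∈ (hyp (altVec (edgeIdx N p))).comap (c.signedEdgeMap N) := by
      simp [hy]
    rw [comap_signedEdgeMap_hyp, mem_braidHyp_mk] at hp
    simp [hp]
  · rintro ⟨a, rfl⟩
    rw [map_smul, signedEdgeMap_one, smul_zero]

theorem finrank_ker_signedEdgeMap (hG : G.Connected) :
    Module.finrank ℝ ↥(LinearMap.ker (c.signedEdgeMap N)) = 1 := by
  have := hG.nonempty
  rw [c.ker_signedEdgeMap N hG, finrank_span_singleton one_ne_zero]

theorem signedEdgeMap_surjective [Fintype V] (hG : G.IsTree) :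
    Function.Surjective (c.signedEdgeMap N) := by
  have h := LinearMap.finrank_range_add_finrank_ker (c.signedEdgeMap N)
  rw [c.finrank_ker_signedEdgeMap N hG.connected, Module.finrank_fintype_fun_eq_card,
    hG.card_eq_of_edgeSet_equiv N] at h
  rw [← LinearMap.range_eq_top]
  apply Submodule.eq_top_of_finrank_eq
  rw [Module.finrank_fintype_fun_eq_card, Fintype.card_fin]
  omega

theorem image_comap_signedEdgeMap_MASet (hG : G.IsTree) :
    Submodule.comap (c.signedEdgeMap N) '' MASet G N = braidHyp '' (⊤ : SimpleGraph V).edgeSet := by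
  ext H
  constructor
  · rintro ⟨_, ⟨a, b, p, hlen, hp, rfl⟩ | ⟨a, p, hcyc, -, rfl⟩, rfl⟩
    · refine ⟨s(a, b), ?_, (c.comap_signedEdgeMap_hyp N p).symm⟩
      rw [mem_edgeSet, top_adj]
      rintro rfl
      exact hlen.ne' (Walk.length_eq_zero_iff.2 (Walk.isPath_iff_nil.1 hp))
    · exact (hG.isAcyclic p hcyc).elim
  · rintro ⟨e, he, rfl⟩
    induction e using Sym2.ind with
    | _ a b =>
      obtain ⟨p, hp, -⟩ := hG.existsUnique_path a b
      have hlen : 0 < p.length :=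
        Nat.pos_of_ne_zero fun h => ((mem_edgeSet _).1 he).ne (p.eq_of_length_eq_zero h)
      exact ⟨_, Or.inl ⟨a, b, p, hlen, hp, rfl⟩, c.comap_signedEdgeMap_hyp N p⟩

end Coloring

end SimpleGraph

theorem charPoly_MA_tree_general {V : Type*} [Fintype V] {n : ℕ}
    (G : SimpleGraph V) (hG : G.IsTree) (N : G.edgeSet ≃ Fin n)
    (A : Finset (Submodule ℝ (Fin n → ℝ)))
    (hA : (↑A : Set (Submodule ℝ (Fin n → ℝ))) = MASet G N) (t : ℝ) :
    charPolyEval A t = ∏ i ∈ Finset.range n, (t - (i + 1)) := by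
  classical
  obtain ⟨c⟩ := hG.colorable_two
  have hψ := c.signedEdgeMap_surjective N hG
  have hA' : A.image (Submodule.comap (c.signedEdgeMap N))
      = (⊤ : SimpleGraph V).edgeFinset.image braidHyp := by
    apply Finset.coe_injective
    simp only [Finset.coe_image, hA, SimpleGraph.coe_edgeFinset, c.image_comap_signedEdgeMap_MASet N hG]
  have hX : X * arrangementCharPoly A id = X * (descPochhammer ℝ n).comp (X - 1) := calc
    X * arrangementCharPoly A id = arrangementCharPoly A (Submodule.comap (c.signedEdgeMap N)) := by
      rw [arrangementCharPoly_comap hψ, c.finrank_ker_signedEdgeMap N hG.connected, pow_one]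
      rfl
    _ = arrangementCharPoly (⊤ : SimpleGraph V).edgeFinset braidHyp := by
      rw [← arrangementCharPoly_image (Submodule.comap_injective_of_surjective hψ).injOn, hA',
        arrangementCharPoly_image (braidHyp_injOn.mono fun e he => by simpa using he)]
    _ = X * (descPochhammer ℝ n).comp (X - 1) := by
      rw [arrangementCharPoly_edgeFinset_top, hG.card_eq_of_edgeSet_equiv N,
        descPochhammer_succ_left]
  rw [← eval_arrangementCharPoly_id, mul_left_cancel₀ X_ne_zero hX, eval_comp,
    descPochhammer_eval_eq_prod_range]
  simp [sub_sub, add_comm]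

/-- If `G` is a tree with `n` edges, then the characteristic polynomial of its matching
arrangement equals `(t - 1)(t - 2) ⋯ (t - n)`. -/
theorem charPoly_MA_tree {V : Type*} [Fintype V] [DecidableEq V] {n : ℕ}
    (G : SimpleGraph V) (hG : G.IsTree) (N : G.edgeSet ≃ Fin n)
    (A : Finset (Submodule ℝ (Fin n → ℝ)))
    (hA : (↑A : Set (Submodule ℝ (Fin n → ℝ))) = MASet G N) (t : ℝ) :
    charPolyEval A t = ∏ i ∈ Finset.range n, (t - (i + 1)) :=
  charPoly_MA_tree_general G hG N A hA t
end
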